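/- Let g = h ⊕ m be a finite-dimensional real Lie algebra with a vector-space direct sum decomposition, ⟨·,·⟩ a naturally reductive inner product on m, and f: m → m a metric f-structure. Then, with (∇_X f)(Y) = ½([X, fY]_m − f([X,Y]_m)) and T(X,Y) = ¼ f((∇_{fX} f)(fY) − (∇_{f²X} f)(f²Y)), one has T(X,X) = 0 for all X ∈ m. (Any invariant metric f-structure on a naturally reductive homogeneous space (G/H, g) is a G₁f-structure.) -/
import Mathlib


/-- Any invariant metric f-structure on a naturally reductive homogeneous
space is a G₁f-structure: T(X,X) = 0 for all X ∈ m. -/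
theorem stmt_15 (g : Type*) [LieRing g] [LieAlgebra ℝ g] [FiniteDimensional ℝ g]
    (h m : Submodule ℝ g) (hc : IsCompl h m)
    -- the inner product on m
    (B : m →ₗ[ℝ] m →ₗ[ℝ] ℝ)
    (hBsymm : ∀ X Y : m, B X Y = B Y X)
    (hBpos : ∀ X : m, X ≠ 0 → 0 < B X X)
    -- natural reductivity: ⟨[X,Y]_m, Z⟩ = ⟨X, [Y,Z]_m⟩
    (hBnat : ∀ X Y Z : m,
      B (m.linearProjOfIsCompl h hc.symm ⁅(X : g), (Y : g)⁆) Z =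
        B X (m.linearProjOfIsCompl h hc.symm ⁅(Y : g), (Z : g)⁆))
    -- the metric f-structure
    (f : m →ₗ[ℝ] m)
    (hf3 : ∀ X : m, f (f (f X)) + f X = 0)
    (hfskew : ∀ X Y : m, B (f X) Y + B X (f Y) = 0)
    -- the covariant derivative (∇_X f)(Y) = ½([X, fY]_m − f([X,Y]_m))
    (nabla : m → m → m)
    (hnabla : ∀ X Y : m, nabla X Y = (1 / 2 : ℝ) •
      (m.linearProjOfIsCompl h hc.symm ⁅(X : g), (f Y : g)⁆ -
        f (m.linearProjOfIsCompl h hc.symm ⁅(X : g), (Y : g)⁆)))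
    -- the composition tensor T(X,Y) = ¼ f((∇_{fX} f)(fY) − (∇_{f²X} f)(f²Y))
    (T : m → m → m)
    (hT : ∀ X Y : m, T X Y = (1 / 4 : ℝ) •
      f (nabla (f X) (f Y) - nabla (f (f X)) (f (f Y)))) :
    ∀ X : m, T X X = 0 := by
  intro X
  have h3 : f (f (f X)) = -f X := eq_neg_of_add_eq_zero_left (hf3 X)
  rw [hT, hnabla, hnabla, h3]
  have hb : (⁅(f (f X) : g), ((-f X : m) : g)⁆ : g) = ⁅(f X : g), (f (f X) : g)⁆ := by
    simp [lie_skew]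
  simp [lie_self, hb, sub_self]
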